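/- Suppose Q(r) > 0 for every nonzero r ∈ LC⁺. Then for any A ∈ ℝ⁴, no nonzero point r ∈ LC⁺ is a local maximum of V restricted to LC⁺. (The Landau potential stable in a strong sense has no nontrivial local maxima in the orbit space.) -/

import Mathlib

open Matrix

/-- The forward lightcone in ℝ⁴. -/
def LCplus : Set (Fin 4 → ℝ) :=
  {r | 0 ≤ r 0 ∧ (r 0) ^ 2 = (r 1) ^ 2 + (r 2) ^ 2 + (r 3) ^ 2}

/-- Minkowski inner product ⟨x, y⟩ = x₀y₀ − x₁y₁ − x₂y₂ − x₃y₃. -/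
def minkDot (x y : Fin 4 → ℝ) : ℝ :=
  x 0 * y 0 - x 1 * y 1 - x 2 * y 2 - x 3 * y 3

/-- The quadratic form associated to a 4×4 matrix. -/
def Q (B : Matrix (Fin 4) (Fin 4) ℝ) (r : Fin 4 → ℝ) : ℝ := r ⬝ᵥ B.mulVec r

lemma smul_mem_LCplus {r : Fin 4 → ℝ} (hr : r ∈ LCplus) {t : ℝ} (ht : 0 ≤ t) :
    t • r ∈ LCplus := by
  obtain ⟨h0, h1⟩ := hr
  refine ⟨by simpa using mul_nonneg ht h0, ?_⟩
  simp only [Pi.smul_apply, smul_eq_mul, mul_pow]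
  rw [h1]; ring

lemma Q_smul (B : Matrix (Fin 4) (Fin 4) ℝ) (r : Fin 4 → ℝ) (t : ℝ) :
    Q B (t • r) = t ^ 2 * Q B r := by
  simp only [Q, Matrix.mulVec_smul, dotProduct_smul, smul_dotProduct, smul_eq_mul]
  ring

lemma minkDot_smul (A r : Fin 4 → ℝ) (t : ℝ) :
    minkDot A (t • r) = t * minkDot A r := by
  simp only [minkDot, Pi.smul_apply, smul_eq_mul]; ring

/-- A Landau potential stable in a strong sense has no nontrivial local maxima
on the forward lightcone. -/
theorem no_nontrivial_local_maxima
    (B : Matrix (Fin 4) (Fin 4) ℝ) (hB : B.IsSymm)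
    (hpos : ∀ r ∈ LCplus, r ≠ 0 → 0 < Q B r)
    (A : Fin 4 → ℝ) :
    ∀ r ∈ LCplus, r ≠ 0 →
      ¬ IsLocalMaxOn (fun s : Fin 4 → ℝ => -minkDot A s + (1 / 2) * Q B s) LCplus r := by
  intro r hr hr0 hmax
  obtain ⟨ε, hε, hball⟩ := Metric.mem_nhdsWithin_iff.mp hmax
  have hq := hpos r hr hr0
  have hrn : 0 < ‖r‖ := norm_pos_iff.mpr hr0
  set δ : ℝ := min (ε / (2 * ‖r‖)) 1 with hδdef
  have hδ0 : 0 < δ := lt_min (div_pos hε (by positivity)) one_pos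
  have hδ1 : δ ≤ 1 := min_le_right _ _
  have hδε : δ * ‖r‖ < ε := by
    have h1 : δ ≤ ε / (2 * ‖r‖) := min_le_left _ _
    have := mul_le_mul_of_nonneg_right h1 hrn.le
    calc δ * ‖r‖ ≤ ε / (2 * ‖r‖) * ‖r‖ := this
      _ = ε / 2 := by field_simp
      _ < ε := by linarith
  have hdist : ∀ t : ℝ, dist (t • r) r = |t - 1| * ‖r‖ := by
    intro t
    rw [dist_eq_norm]
    have : t • r - r = (t - 1) • r := by rw [sub_smul, one_smul]
    rw [this, norm_smul, Real.norm_eq_abs]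
  have key : ∀ t : ℝ, 0 ≤ t → |t - 1| ≤ δ →
      -(t * minkDot A r) + (1 / 2) * (t ^ 2 * Q B r)
        ≤ -minkDot A r + (1 / 2) * Q B r := by
    intro t ht habs
    have hmem : t • r ∈ Metric.ball r ε ∩ LCplus := by
      refine ⟨?_, smul_mem_LCplus hr ht⟩
      rw [Metric.mem_ball, hdist]
      calc |t - 1| * ‖r‖ ≤ δ * ‖r‖ := mul_le_mul_of_nonneg_right habs hrn.le
        _ < ε := hδε
    have := hball hmem
    simpa [minkDot_smul, Q_smul] using this
  have h1 := key (1 + δ) (by linarith) (by rw [abs_of_nonneg (by linarith)]; linarith)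
  have h2 := key (1 - δ) (by linarith) (by rw [abs_of_nonpos (by linarith)]; linarith)
  nlinarith [sq_nonneg δ, mul_pos (mul_pos hδ0 hδ0) hq]
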